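/- Let M be a (C',C)-bicomodule and F: (right C-comodules) → (right D-comodules) a coproduct-preserving K-linear functor that is M-compatible, i.e. Υ_{C',M} and Υ_{C'⊗_{A'}C',M} are isomorphisms. Then the unique A'-linear map λ_{F(M)}: F(M) → C' ⊗_{A'} F(M) satisfying Υ_{C',M} ∘ λ_{F(M)} = F(λ_M) is a left C'-comodule structure making F(M) a (C',D)-bicomodule. Moreover, for any natural transformation η: F₁ → F₂ between M-compatible coproduct-preserving K-linear functors, η_M: F₁(M) → F₂(M) is a (C',D)-bicomodule homomorphism. -/

import Mathlib

/-! # Preamble: corings and comodules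
We follow "Separable functors in corings" (J. Gómez-Torrecillas).
`K`-algebras are monoid objects in `ModuleCat K`; a `T`-`A`-bimodule is a
1-morphism `T ⟶ A` in the bicategory of algebras and bimodules, whose
composition is the tensor product over the middle algebra. -/

open CategoryTheory Limits Bicategory

noncomputable section
universe u

namespace CoringSep

variable (K : Type u) [CommRing K]

open MonoidalCategory in
instance (X : ModuleCat.{u} K) : PreservesColimitsOfSize.{0,0} (tensorLeft X) := by
  have : PreservesColimits (tensorLeft X) := (ihom.adjunction X).leftAdjoint_preservesColimits
  exact preservesSmallestColimits_of_preservesColimits _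

open MonoidalCategory in
instance (X : ModuleCat.{u} K) : PreservesColimitsOfSize.{0,0} (tensorRight X) := by
  have : PreservesColimits (tensorRight X) :=
    preservesColimits_of_natIso
      (NatIso.ofComponents (fun Y => β_ X Y) (fun f => by simp) :
        tensorLeft X ≅ tensorRight X)
  exact preservesSmallestColimits_of_preservesColimits _

/-- `K`-algebras (as monoid objects in `K`-modules), wrapped so that they form
a bicategory whose 1-morphisms `A ⟶ B` are `A`-`B`-bimodules and where
composition of 1-morphisms is `⊗_B`. -/
structure Alg where
  val : Mon (ModuleCat.{u} K)

variable {K}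

instance : Bicategory (Alg K) where
  Hom X Y := Bimod X.val Y.val
  homCategory X Y := (inferInstance : Category (Bimod X.val Y.val))
  id X := Bimod.regular X.val
  comp M N := M.tensorBimod N
  whiskerLeft L _ _ f := Bimod.whiskerLeft L f
  whiskerRight f N := Bimod.whiskerRight f N
  associator := Bimod.associatorBimod
  leftUnitor := Bimod.leftUnitorBimod
  rightUnitor := Bimod.rightUnitorBimod
  whiskerLeft_id _ _ := Bimod.whiskerLeft_id_bimod
  whiskerLeft_comp M _ _ _ f g := Bimod.whiskerLeft_comp_bimod M f g
  id_whiskerLeft := Bimod.id_whiskerLeft_bimod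
  comp_whiskerLeft M N _ _ f := Bimod.comp_whiskerLeft_bimod M N f
  id_whiskerRight _ _ := Bimod.id_whiskerRight_bimod
  comp_whiskerRight f g Q := Bimod.comp_whiskerRight_bimod f g Q
  whiskerRight_id := Bimod.whiskerRight_id_bimod
  whiskerRight_comp := Bimod.whiskerRight_comp_bimod
  whisker_assoc M _ _ f P := Bimod.whisker_assoc_bimod M f P
  whisker_exchange := Bimod.whisker_exchange_bimod
  pentagon := Bimod.pentagon_bimod
  triangle := Bimod.triangle_bimod

variable (K) in
/-- The base ring `K`, as a `K`-algebra; right `A`-modules are the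
1-morphisms `base K ⟶ A`. -/
def base : Alg K := ⟨Mon.trivial (ModuleCat.{u} K)⟩

variable {a b s t : Alg K}

/-- An `A`-coring: an `A`-bimodule `X` together with a coassociative,
counital `A`-bimodule comultiplication `X ⟶ X ⊗_A X`. -/
structure Coring (a : Alg K) where
  X : a ⟶ a
  comul : X ⟶ X ≫ X
  counit : X ⟶ 𝟙 a
  coassoc : comul ≫ comul ▷ X ≫ (α_ X X X).hom = comul ≫ X ◁ comul
  comul_counit : comul ≫ X ◁ counit ≫ (ρ_ X).hom = 𝟙 X
  counit_comul : comul ≫ counit ▷ X ≫ (λ_ X).hom = 𝟙 X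

/-- A right `C`-comodule which is a `T`-`A`-bimodule with `T`-linear coaction;
plain right `C`-comodules are obtained for `T = base K`. -/
structure RightComodule (t : Alg K) {a : Alg K} (C : Coring a) where
  M : t ⟶ a
  coact : M ⟶ M ≫ C.X
  coassoc : coact ≫ coact ▷ C.X ≫ (α_ M C.X C.X).hom = coact ≫ M ◁ C.comul
  counit : coact ≫ M ◁ C.counit ≫ (ρ_ M).hom = 𝟙 M

/-- A left `C`-comodule which is an `A`-`S`-bimodule with `S`-linear coaction. -/
structure LeftComodule {a : Alg K} (C : Coring a) (s : Alg K) where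
  M : a ⟶ s
  coact : M ⟶ C.X ≫ M
  coassoc : coact ≫ C.comul ▷ M ≫ (α_ C.X C.X M).hom = coact ≫ C.X ◁ coact
  counit : coact ≫ C.counit ▷ M ≫ (λ_ M).hom = 𝟙 M

/-- A `C'`-`C`-bicomodule. -/
structure Bicomodule {a' a : Alg K} (C' : Coring a') (C : Coring a) where
  M : a' ⟶ a
  rcoact : M ⟶ M ≫ C.X
  lcoact : M ⟶ C'.X ≫ M
  rcoassoc : rcoact ≫ rcoact ▷ C.X ≫ (α_ M C.X C.X).hom = rcoact ≫ M ◁ C.comul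
  rcounit : rcoact ≫ M ◁ C.counit ≫ (ρ_ M).hom = 𝟙 M
  lcoassoc : lcoact ≫ C'.comul ▷ M ≫ (α_ C'.X C'.X M).hom = lcoact ≫ C'.X ◁ lcoact
  lcounit : lcoact ≫ C'.counit ▷ M ≫ (λ_ M).hom = 𝟙 M
  compat : rcoact ≫ lcoact ▷ C.X ≫ (α_ C'.X M C.X).hom = lcoact ≫ C'.X ◁ rcoact

variable {C : Coring a}

/-- The right comodule underlying a bicomodule. -/
def Bicomodule.toRight {a' : Alg K} {C' : Coring a'} (M : Bicomodule C' C) :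
    RightComodule a' C := ⟨M.M, M.rcoact, M.rcoassoc, M.rcounit⟩

/-- The left comodule underlying a bicomodule. -/
def Bicomodule.toLeft {a' : Alg K} {C' : Coring a'} (M : Bicomodule C' C) :
    LeftComodule C' a := ⟨M.M, M.lcoact, M.lcoassoc, M.lcounit⟩

/-- The coring `C`, considered as a right comodule over itself. -/
def coregular (C : Coring a) : RightComodule a C :=
  ⟨C.X, C.comul, C.coassoc, C.comul_counit⟩

/-- Morphisms of right `C`-comodules. -/
@[ext] structure ComodHom (M N : RightComodule t C) where
  f : M.M ⟶ N.M
  colinear : M.coact ≫ f ▷ C.X = f ≫ N.coact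

instance : Category (RightComodule t C) where
  Hom := ComodHom
  id M := ⟨𝟙 M.M, by simp⟩
  comp f g := ⟨f.f ≫ g.f, by
    rw [Bicategory.comp_whiskerRight, ← Category.assoc, f.colinear, Category.assoc, g.colinear,
      Category.assoc]⟩

@[simp] theorem comod_id_f (M : RightComodule t C) : (𝟙 M : ComodHom M M).f = 𝟙 M.M := rfl
@[simp] theorem comod_comp_f {M N P : RightComodule t C} (f : M ⟶ N) (g : N ⟶ P) :
    (f ≫ g).f = f.f ≫ g.f := rfl

@[ext] theorem comodHom_ext' {M N : RightComodule t C} (f g : M ⟶ N) (h : f.f = g.f) : f = g :=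
  ComodHom.ext h

/-- The category of (plain) right comodules over a coring. -/
abbrev Comod (C : Coring a) := RightComodule (base K) C

@[simp] lemma bimod_comp_hom {x y : Alg K} {M N P : x ⟶ y} (f : M ⟶ N) (g : N ⟶ P) :
    (f ≫ g).hom = f.hom ≫ g.hom := rfl

@[simp] lemma bimod_id_hom {x y : Alg K} (M : x ⟶ y) :
    Bimod.Hom.hom (𝟙 M) = 𝟙 M.X := rfl

/-- The forgetful functor from right `C`-comodules to the underlying
bimodule (module) category. -/
def forgetComod (t : Alg K) (C : Coring a) : RightComodule t C ⥤ (t ⟶ a) where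
  obj M := M.M
  map f := f.f

/-- The functor `- ⊗_A N` given by postcomposition with a 1-morphism (an
`A`-`S`-bimodule) `N`. -/
def postF (t : Alg K) (N : a ⟶ s) : (t ⟶ a) ⥤ (t ⟶ s) where
  obj M := M ≫ N
  map f := f ▷ N

/-- The functor `W ⊗_A -` given by precomposition with a `T`-`A`-bimodule `W`. -/
def preF (W : t ⟶ a) (s : Alg K) : (a ⟶ s) ⥤ (t ⟶ s) where
  obj N := W ≫ N
  map f := W ◁ f

/-- A functor *preserves the equalizer* of a pair `(f, g)` if it sends any
equalizer fork of `(f, g)` to a limit cone. -/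
def PreservesEqualizerOf {𝒞 𝒟 : Type*} [Category 𝒞] [Category 𝒟] (F : 𝒞 ⥤ 𝒟)
    {X Y : 𝒞} (f g : X ⟶ Y) : Prop :=
  ∀ c : Fork f g, IsLimit c → Nonempty (IsLimit (F.mapCone c))

/-- `N` is flat as a left `A`-module: `- ⊗_A N` preserves all equalizers of
right `A`-module maps. -/
def LeftFlat (N : a ⟶ s) : Prop :=
  ∀ (t : Alg K) {X Y : t ⟶ a} (f g : X ⟶ Y), PreservesEqualizerOf (postF t N) f g

/-- `W` is flat as a right `A`-module: `W ⊗_A -` preserves all equalizers of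
left `A`-module maps. -/
def RightFlat (W : t ⟶ a) : Prop :=
  ∀ (s : Alg K) {X Y : a ⟶ s} (f g : X ⟶ Y), PreservesEqualizerOf (preF W s) f g

section Cotensor

/-- The first map `ρ_M ⊗_A N` in the equalizer diagram defining the cotensor
product `M □_C N`. -/
def cotensorFst (M : RightComodule t C) (N : LeftComodule C s) :
    M.M ≫ N.M ⟶ (M.M ≫ C.X) ≫ N.M :=
  M.coact ▷ N.M

/-- The second map `M ⊗_A λ_N` in the equalizer diagram defining `M □_C N`. -/
def cotensorSnd (M : RightComodule t C) (N : LeftComodule C s) :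
    M.M ≫ N.M ⟶ (M.M ≫ C.X) ≫ N.M :=
  M.M ◁ N.coact ≫ (α_ M.M C.X N.M).inv

/-- A choice of cotensor product `M □_C N`: an equalizer of the pair
`(ρ_M ⊗_A N, M ⊗_A λ_N)` in the category of `T`-`S`-bimodules. -/
structure CotensorFork (M : RightComodule t C) (N : LeftComodule C s) where
  pt : t ⟶ s
  ι : pt ⟶ M.M ≫ N.M
  w : ι ≫ cotensorFst M N = ι ≫ cotensorSnd M N
  isLimit : IsLimit (Fork.ofι ι w)

end Cotensor

/-- A functor `F` is *separable* if the natural transformation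
`Hom(-,-) ⟶ Hom(F-,F-)` of bifunctors is a split monomorphism, i.e. admits a
retraction `ζ` natural in both variables. -/
def Functor.Separable {𝒞 𝒟 : Type*} [Category 𝒞] [Category 𝒟] (F : 𝒞 ⥤ 𝒟) : Prop :=
  ∃ ζ : ∀ X Y : 𝒞, (F.obj X ⟶ F.obj Y) → (X ⟶ Y),
    (∀ (X Y : 𝒞) (f : X ⟶ Y), ζ X Y (F.map f) = f) ∧
    (∀ (X X' Y Y' : 𝒞) (x : X' ⟶ X) (y : Y ⟶ Y') (h : F.obj X ⟶ F.obj Y),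
      ζ X' Y' (F.map x ≫ h ≫ F.map y) = x ≫ ζ X Y h ≫ y)

end CoringSep
namespace CoringSep
open CategoryTheory Limits Bicategory

variable {K : Type u} [CommRing K] {a b s t : Alg K} {C : Coring a} {D : Coring b}

/-- The right `D`-comodule `X ⊗_A N` obtained by tensoring a right `D`-comodule
`N` (with underlying `A`-`B`-bimodule) by a `T`-`A`-bimodule `X`. -/
def lextendObj (X : t ⟶ a) (N : RightComodule a D) : RightComodule t D where
  M := X ≫ N.M
  coact := X ◁ N.coact ≫ (α_ X N.M D.X).inv
  coassoc := by
    have hc : (α_ X (N.M ≫ D.X) D.X).inv ≫ (α_ X N.M D.X).inv ▷ D.X ≫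
        (α_ (X ≫ N.M) D.X D.X).hom =
        X ◁ (α_ N.M D.X D.X).hom ≫ (α_ X N.M (D.X ≫ D.X)).inv := by
      bicategory_coherence
    simp only [Bicategory.comp_whiskerRight, Bicategory.whisker_assoc,
      Bicategory.comp_whiskerLeft, Category.assoc, Iso.inv_hom_id_assoc]
    rw [hc, ← Bicategory.whiskerLeft_comp_assoc, ← Bicategory.whiskerLeft_comp_assoc,
      Category.assoc, N.coassoc]
    simp only [Bicategory.whiskerLeft_comp, Category.assoc]
  counit := by
    simp only [Bicategory.comp_whiskerLeft, Category.assoc, Iso.inv_hom_id_assoc]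
    rw [← whiskerLeft_rightUnitor]
    simp only [← Bicategory.whiskerLeft_comp, Category.assoc]
    rw [N.counit]
    simp
end CoringSep

namespace CoringSep
open CategoryTheory Limits Bicategory

variable {K : Type u} [CommRing K] {a b s t : Alg K} {C : Coring a} {D : Coring b}

/-- The functor `- ⊗_A N : Mod-(T,A) ⥤ Comod-(T,D)` induced by a right
`D`-comodule `N` with underlying `A`-`B`-bimodule. -/
def lextendF (t : Alg K) (N : RightComodule a D) : (t ⟶ a) ⥤ RightComodule t D where
  obj X := lextendObj X N
  map {X Y} f :=
    ⟨f ▷ N.M, by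
      dsimp [lextendObj]
      rw [Category.assoc, ← associator_inv_naturality_left, whisker_exchange_assoc]⟩
  map_id X := by ext; simp [lextendObj]
  map_comp f g := by ext; simp [lextendObj]

end CoringSep

namespace CoringSep
open CategoryTheory Limits

section Helpers
open MonoidalCategory
variable {K : Type u} [CommRing K]

lemma triv_one_act (X : ModuleCat.{u} K) :
    ((𝟙 (𝟙_ (ModuleCat K))) ▷ X) ≫ (λ_ X).hom = (λ_ X).hom := by simp

lemma triv_left_assoc (X : ModuleCat.{u} K) :
    ((λ_ (𝟙_ (ModuleCat K))).hom ▷ X) ≫ (λ_ X).hom =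
      (α_ (𝟙_ (ModuleCat K)) (𝟙_ (ModuleCat K)) X).hom ≫
        ((𝟙_ (ModuleCat K)) ◁ (λ_ X).hom) ≫ (λ_ X).hom := by
  coherence

lemma triv_middle_assoc {Y : ModuleCat.{u} K} (X : ModuleCat.{u} K) (act : X ⊗ Y ⟶ X) :
    ((λ_ X).hom ▷ Y) ≫ act =
      (α_ (𝟙_ (ModuleCat K)) X Y).hom ≫ ((𝟙_ (ModuleCat K)) ◁ act) ≫ (λ_ X).hom := by
  rw [MonoidalCategory.leftUnitor_naturality, MonoidalCategory.leftUnitor_tensor_hom]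
  simp

lemma triv_nat {X Y : ModuleCat.{u} K} (f : X ⟶ Y) :
    (λ_ X).hom ≫ f = ((𝟙_ (ModuleCat K)) ◁ f) ≫ (λ_ Y).hom :=
  (MonoidalCategory.leftUnitor_naturality f).symm

end Helpers

variable {K : Type u} [CommRing K] {a t t' : Alg K}

lemma base_actLeft (P : base K ⟶ t') :
    P.actLeft = (MonoidalCategory.leftUnitor P.X).hom := by
  have h := P.one_actLeft
  erw [MonoidalCategory.id_whiskerRight, Category.id_comp] at h
  exact h

/-- Forgetting the left `T`-action of a `T`-`A`-bimodule: restriction of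
scalars along `K → T`. -/
def resBase (t a : Alg K) : (t ⟶ a) ⥤ (base K ⟶ a) where
  obj M :=
    { X := M.X
      actLeft := (MonoidalCategory.leftUnitor M.X).hom
      one_actLeft := triv_one_act M.X
      left_assoc := triv_left_assoc M.X
      actRight := M.actRight
      actRight_one := M.actRight_one
      right_assoc := M.right_assoc
      middle_assoc := triv_middle_assoc M.X M.actRight }
  map f := { hom := f.hom
             left_act_hom := triv_nat f.hom
             right_act_hom := f.right_act_hom }
  map_id _ := rfl
  map_comp _ _ := rfl


variable {C : Coring a}

/-- The coaction of a `(T,C)`-bicomodule, as a morphism of the underlying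
plain bimodules. -/
def resCoact (M : RightComodule t C) :
    (resBase t a).obj M.M ⟶ (resBase t a).obj M.M ≫ C.X where
  hom := M.coact.hom
  left_act_hom := by
    rw [base_actLeft ((resBase t a).obj M.M ≫ C.X)]
    exact triv_nat M.coact.hom
  right_act_hom := M.coact.right_act_hom

/-- A comodule morphism, restricted. -/
def resMap {M N : RightComodule t C} (f : M ⟶ N) :
    (resBase t a).obj M.M ⟶ (resBase t a).obj N.M where
  hom := f.f.hom
  left_act_hom := triv_nat f.f.hom
  right_act_hom := f.f.right_act_hom

set_option maxHeartbeats 1600000 in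
/-- Forgetting the left `T`-action of a `(T,C)`-bicomodule: the underlying
plain right `C`-comodule. -/
def resComod (t : Alg K) (C : Coring a) : RightComodule t C ⥤ Comod C where
  obj M :=
    { M := (resBase t a).obj M.M
      coact := resCoact M
      coassoc := by
        apply Bimod.hom_ext
        show (M.coact ≫ M.coact ▷ C.X ≫ (α_ M.M C.X C.X).hom).hom =
          (M.coact ≫ M.M ◁ C.comul).hom
        exact congrArg Bimod.Hom.hom M.coassoc
      counit := by
        apply Bimod.hom_ext
        show (M.coact ≫ M.M ◁ C.counit ≫ (ρ_ M.M).hom).hom = Bimod.Hom.hom (𝟙 M.M)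
        exact congrArg Bimod.Hom.hom M.counit }
  map {M N} f := ⟨resMap f, by
    apply Bimod.hom_ext
    show (M.coact ≫ f.f ▷ C.X).hom = (f.f ≫ N.coact).hom
    exact congrArg Bimod.Hom.hom f.colinear⟩
  map_id _ := rfl
  map_comp _ _ := rfl

end CoringSep

namespace CoringSep
open CategoryTheory Limits Bicategory

variable {K : Type u} [CommRing K] {x y a t : Alg K} {C : Coring a}

/-- Sum of two bimodule morphisms. -/
def addB {M N : x ⟶ y} (f g : M ⟶ N) : M ⟶ N where
  hom := f.hom + g.hom
  left_act_hom := by simp [Preadditive.comp_add, Preadditive.add_comp]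
  right_act_hom := by simp [Preadditive.comp_add, Preadditive.add_comp]

/-- Scalar multiple of a bimodule morphism. -/
def smulB {M N : x ⟶ y} (k : K) (f : M ⟶ N) : M ⟶ N where
  hom := k • f.hom
  left_act_hom := by
    rw [Linear.comp_smul, MonoidalLinear.whiskerLeft_smul, Linear.smul_comp,
      f.left_act_hom]
  right_act_hom := by
    rw [Linear.comp_smul, MonoidalLinear.smul_whiskerRight, Linear.smul_comp,
      f.right_act_hom]

lemma addB_whiskerRight {M N : x ⟶ y} (f g : M ⟶ N) (P : y ⟶ a) :
    (addB f g) ▷ P = addB (f ▷ P) (g ▷ P) := by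
  apply Bimod.hom_ext
  apply coequalizer.hom_ext
  simp [addB, Bicategory.whiskerRight, Bimod.whiskerRight, Preadditive.comp_add,
    Preadditive.add_comp, MonoidalPreadditive.add_whiskerRight]
  simp only [coequalizer.π]
  erw [ι_colimMap]
  conv_rhs => erw [Preadditive.comp_add]
  erw [ι_colimMap, ι_colimMap]
  simp only [parallelPairHom_app_one]
  exact Preadditive.add_comp _ _ _ _ _ _

lemma smulB_whiskerRight {M N : x ⟶ y} (k : K) (f : M ⟶ N) (P : y ⟶ a) :
    (smulB k f) ▷ P = smulB k (f ▷ P) := by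
  apply Bimod.hom_ext
  apply coequalizer.hom_ext
  simp [smulB, Bicategory.whiskerRight, Bimod.whiskerRight, Linear.comp_smul,
    Linear.smul_comp, MonoidalLinear.smul_whiskerRight]
  simp only [coequalizer.π]
  erw [ι_colimMap]
  conv_rhs => erw [Linear.comp_smul]
  erw [ι_colimMap]
  simp only [parallelPairHom_app_one]
  exact Linear.smul_comp _ _ _ _ _ _

/-- Sum of two comodule morphisms. -/
def addC {M N : RightComodule t C} (f g : M ⟶ N) : M ⟶ N where
  f := addB f.f g.f
  colinear := by
    rw [addB_whiskerRight]
    apply Bimod.hom_ext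
    have h1 := congrArg Bimod.Hom.hom f.colinear
    have h2 := congrArg Bimod.Hom.hom g.colinear
    simp only [bimod_comp_hom] at h1 h2
    show M.coact.hom ≫ ((f.f ▷ C.X).hom + (g.f ▷ C.X).hom) =
      (f.f.hom + g.f.hom) ≫ N.coact.hom
    rw [Preadditive.comp_add, Preadditive.add_comp, h1, h2]

/-- Scalar multiple of a comodule morphism. -/
def smulC {M N : RightComodule t C} (k : K) (f : M ⟶ N) : M ⟶ N where
  f := smulB k f.f
  colinear := by
    rw [smulB_whiskerRight]
    apply Bimod.hom_ext
    have h1 := congrArg Bimod.Hom.hom f.colinear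
    simp only [bimod_comp_hom] at h1
    show M.coact.hom ≫ (k • (f.f ▷ C.X).hom) = (k • f.f.hom) ≫ N.coact.hom
    rw [Linear.comp_smul, Linear.smul_comp, h1]

/-- A functor between comodule categories is `K`-linear if it preserves sums
and `K`-scalar multiples of morphisms. -/
def KLinearFunctor {a b : Alg K} {C : Coring a} {D : Coring b}
    (F : Comod C ⥤ Comod D) : Prop :=
  (∀ (X Y : Comod C) (f g : X ⟶ Y), F.map (addC f g) = addC (F.map f) (F.map g)) ∧
  (∀ (X Y : Comod C) (k : K) (f : X ⟶ Y), F.map (smulC k f) = smulC k (F.map f))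

/-- A functor between comodule categories preserves coproducts if it preserves
all small coproduct colimits. -/
def PreservesCoproducts {a b : Alg K} {C : Coring a} {D : Coring b}
    (F : Comod C ⥤ Comod D) : Prop :=
  ∀ (J : Type u) (f : J → Comod C), Nonempty (PreservesColimit (Discrete.functor f) F)

end CoringSep

namespace CoringSep
open CategoryTheory Limits Bicategory

variable {K : Type u} [CommRing K] {a b s t : Alg K} {C : Coring a} {D : Coring b}

/-- Left tensoring of a comodule morphism by a bimodule. -/
def lextendMap (X : s ⟶ t) {N N' : RightComodule t D} (h : N ⟶ N') :
    lextendObj X N ⟶ lextendObj X N' where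
  f := X ◁ h.f
  colinear := by
    dsimp [lextendObj]
    rw [Category.assoc, ← associator_inv_naturality_middle]
    rw [← Bicategory.whiskerLeft_comp_assoc, h.colinear, Bicategory.whiskerLeft_comp_assoc]

/-- The data of the canonical natural transformation
`Υ : - ⊗_T F(M) ⟶ F(- ⊗_T M)` attached to a `K`-linear coproduct-preserving
functor `F` between comodule categories and a `(T,C)`-bicomodule `M`: a left
`T`-module structure `FM` on `F(M)` together with a natural transformation
`Υ`, normalised at the regular module `T`. -/
structure HomNatData {a b t : Alg K} {C : Coring a} {D : Coring b}
    (F : Comod C ⥤ Comod D) (M : RightComodule t C) where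
  /-- `F(M)` with its induced left `T`-action, as a `(T,D)`-bicomodule. -/
  FM : RightComodule t D
  hres : (resComod t D).obj FM = F.obj ((resComod t C).obj M)
  /-- the natural transformation `Υ_{-,M}` -/
  Υ : lextendF (base K) FM ⟶ lextendF (base K) M ⋙ F
  /-- the canonical comparison `T ⊗_T M ≅ M` -/
  cM : lextendObj ((resBase t t).obj (𝟙 t)) M ⟶ (resComod t C).obj M
  hcM : cM.f.hom = (Bimod.leftUnitorBimod M.M).hom.hom
  cM_iso : IsIso cM
  /-- the canonical comparison `T ⊗_T F(M) ≅ F(M)` -/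
  cFM : lextendObj ((resBase t t).obj (𝟙 t)) FM ⟶ (resComod t D).obj FM
  hcFM : cFM.f.hom = (Bimod.leftUnitorBimod FM.M).hom.hom
  cFM_iso : IsIso cFM
  /-- normalisation: `Υ_{T,M}` is the canonical isomorphism
  `T ⊗_T F(M) ≅ F(M) ≅ F(T ⊗_T M)`. -/
  norm : Υ.app ((resBase t t).obj (𝟙 t)) =
    cFM ≫ eqToHom hres ≫ F.map (CategoryTheory.inv cM)

end CoringSep

namespace CoringSep
open CategoryTheory Limits Bicategory

attribute [reducible] lextendF

/-! ### Element-level API for tensor products of bimodules over `ModuleCat K` -/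

section ElementAPI
open MonoidalCategory

variable {K : Type u} [CommRing K] {A₀ B₀ C₀ D₀ : Mon (ModuleCat.{u} K)}

/-- The underlying module of the tensor product of bimodules. -/
abbrev tX (P : Bimod A₀ B₀) (Q : Bimod B₀ C₀) : ModuleCat.{u} K := Bimod.TensorBimod.X P Q

/-- The canonical projection onto the tensor product of bimodules. -/
abbrev tπ (P : Bimod A₀ B₀) (Q : Bimod B₀ C₀) : P.X ⊗ Q.X ⟶ tX P Q := coequalizer.π _ _

lemma tπ_surj (P : Bimod A₀ B₀) (Q : Bimod B₀ C₀) : Function.Surjective (tπ P Q) := by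
  rw [← ModuleCat.epi_iff_surjective]
  exact coequalizer.π_epi

lemma tensor_ext {P : Bimod A₀ B₀} {Q : Bimod B₀ C₀} {W : ModuleCat.{u} K}
    {g₁ g₂ : tX P Q ⟶ W} (h : ∀ p q, g₁ (tπ P Q (p ⊗ₜ q)) = g₂ (tπ P Q (p ⊗ₜ q))) :
    g₁ = g₂ := by
  haveI : Epi (tπ P Q) := coequalizer.π_epi
  rw [← cancel_epi (tπ P Q)]
  exact ModuleCat.hom_ext (TensorProduct.ext' h)

lemma tX_induction {P : Bimod A₀ B₀} {Q : Bimod B₀ C₀} {motive : tX P Q → Prop}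
    (zero : motive 0) (add : ∀ z₁ z₂, motive z₁ → motive z₂ → motive (z₁ + z₂))
    (gen : ∀ p q, motive (tπ P Q (p ⊗ₜ q))) : ∀ z, motive z := by
  intro z
  obtain ⟨w, rfl⟩ := tπ_surj P Q z
  induction w using TensorProduct.induction_on with
  | zero => rw [map_zero]; exact zero
  | tmul p q => exact gen p q
  | add w₁ w₂ h₁ h₂ => rw [map_add]; exact add _ _ h₁ h₂

lemma tmid {P : Bimod A₀ B₀} {Q : Bimod B₀ C₀} (p : P.X) (b : B₀.X) (q : Q.X) :
    tπ P Q (P.actRight (p ⊗ₜ b) ⊗ₜ q) = tπ P Q (p ⊗ₜ Q.actLeft (b ⊗ₜ q)) := by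
  have h := coequalizer.condition (P.actRight ▷ Q.X)
    ((MonoidalCategory.associator _ _ _).hom ≫ (P.X ◁ Q.actLeft))
  have h2 := ConcreteCategory.congr_hom h ((p ⊗ₜ b) ⊗ₜ q)
  exact h2

lemma wR_comm {P₁ P₂ : Bimod A₀ B₀} (f : P₁ ⟶ P₂) (Q : Bimod B₀ C₀) :
    tπ P₁ Q ≫ (Bimod.whiskerRight f Q).hom = (f.hom ▷ Q.X) ≫ tπ P₂ Q := by
  simp [Bimod.whiskerRight, tπ, tX, Bimod.TensorBimod.X]
  erw [ι_colimMap]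
  rfl

lemma wR_apply {P₁ P₂ : Bimod A₀ B₀} (f : P₁ ⟶ P₂) (Q : Bimod B₀ C₀) (p : P₁.X) (q : Q.X) :
    (Bimod.whiskerRight f Q).hom (tπ P₁ Q (p ⊗ₜ q)) = tπ P₂ Q (f.hom p ⊗ₜ q) :=
  ConcreteCategory.congr_hom (wR_comm f Q) (p ⊗ₜ q)

lemma wL_comm (P : Bimod A₀ B₀) {Q₁ Q₂ : Bimod B₀ C₀} (f : Q₁ ⟶ Q₂) :
    tπ P Q₁ ≫ (Bimod.whiskerLeft P f).hom = (P.X ◁ f.hom) ≫ tπ P Q₂ := by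
  simp [Bimod.whiskerLeft, tπ, tX, Bimod.TensorBimod.X]
  erw [ι_colimMap]
  rfl

lemma wL_apply (P : Bimod A₀ B₀) {Q₁ Q₂ : Bimod B₀ C₀} (f : Q₁ ⟶ Q₂) (p : P.X) (q : Q₁.X) :
    (Bimod.whiskerLeft P f).hom (tπ P Q₁ (p ⊗ₜ q)) = tπ P Q₂ (p ⊗ₜ f.hom q) :=
  ConcreteCategory.congr_hom (wL_comm P f) (p ⊗ₜ q)

lemma tactLeft_apply (P : Bimod A₀ B₀) (Q : Bimod B₀ C₀) (a : A₀.X) (p : P.X) (q : Q.X) :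
    Bimod.TensorBimod.actLeft P Q (a ⊗ₜ tπ P Q (p ⊗ₜ q)) =
      tπ P Q (P.actLeft (a ⊗ₜ p) ⊗ₜ q) := by
  have := ConcreteCategory.congr_hom (Bimod.TensorBimod.whiskerLeft_π_actLeft P Q) (a ⊗ₜ (p ⊗ₜ q))
  exact this

lemma tactRight_apply (P : Bimod A₀ B₀) (Q : Bimod B₀ C₀) (c : C₀.X) (p : P.X) (q : Q.X) :
    Bimod.TensorBimod.actRight P Q (tπ P Q (p ⊗ₜ q) ⊗ₜ c) =
      tπ P Q (p ⊗ₜ Q.actRight (q ⊗ₜ c)) := by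
  have := ConcreteCategory.congr_hom (Bimod.TensorBimod.π_tensor_id_actRight P Q) ((p ⊗ₜ q) ⊗ₜ c)
  exact this

lemma lu_apply (P : Bimod A₀ B₀) (a : A₀.X) (p : P.X) :
    Bimod.LeftUnitorBimod.hom P (tπ (Bimod.regular A₀) P (a ⊗ₜ p)) = P.actLeft (a ⊗ₜ p) := by
  have h : tπ (Bimod.regular A₀) P ≫ Bimod.LeftUnitorBimod.hom P = P.actLeft := by
    simp [Bimod.LeftUnitorBimod.hom, tπ, tX, Bimod.TensorBimod.X]
    rfl
  have h2 := ConcreteCategory.congr_hom h (a ⊗ₜ p)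
  exact h2

lemma assocHom_apply (P : Bimod A₀ B₀) (Q : Bimod B₀ C₀) (L : Bimod C₀ D₀)
    (p : P.X) (q : Q.X) (l : L.X) :
    Bimod.AssociatorBimod.hom P Q L
        (tπ (P.tensorBimod Q) L (tπ P Q (p ⊗ₜ q) ⊗ₜ l)) =
      tπ P (Q.tensorBimod L) (p ⊗ₜ tπ Q L (q ⊗ₜ l)) := by
  have h1 : tπ (P.tensorBimod Q) L ≫ Bimod.AssociatorBimod.hom P Q L =
      Bimod.AssociatorBimod.homAux P Q L := coequalizer.π_desc _ _
  have h2 : (tπ P Q ▷ L.X) ≫ Bimod.AssociatorBimod.homAux P Q L =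
      (MonoidalCategory.associator _ _ _).hom ≫ (P.X ◁ tπ Q L) ≫ tπ P (Q.tensorBimod L) :=
    π_tensor_id_preserves_coequalizer_inv_desc _ _ _ _
  have e1 := ConcreteCategory.congr_hom h1 (tπ P Q (p ⊗ₜ q) ⊗ₜ l)
  have e2 := ConcreteCategory.congr_hom h2 ((p ⊗ₜ q) ⊗ₜ l)
  exact e1.trans (e2.trans rfl)

lemma assocInv_apply (P : Bimod A₀ B₀) (Q : Bimod B₀ C₀) (L : Bimod C₀ D₀)
    (p : P.X) (q : Q.X) (l : L.X) :
    Bimod.AssociatorBimod.inv P Q L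
        (tπ P (Q.tensorBimod L) (p ⊗ₜ tπ Q L (q ⊗ₜ l))) =
      tπ (P.tensorBimod Q) L (tπ P Q (p ⊗ₜ q) ⊗ₜ l) := by
  have h1 : tπ P (Q.tensorBimod L) ≫ Bimod.AssociatorBimod.inv P Q L =
      Bimod.AssociatorBimod.invAux P Q L := coequalizer.π_desc _ _
  have h2 : (P.X ◁ tπ Q L) ≫ Bimod.AssociatorBimod.invAux P Q L =
      (MonoidalCategory.associator _ _ _).inv ≫ (tπ P Q ▷ L.X) ≫ tπ (P.tensorBimod Q) L :=
    id_tensor_π_preserves_coequalizer_inv_desc _ _ _ _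
  have e1 := ConcreteCategory.congr_hom h1 (p ⊗ₜ tπ Q L (q ⊗ₜ l))
  have e2 := ConcreteCategory.congr_hom h2 (p ⊗ₜ (q ⊗ₜ l))
  exact e1.trans (e2.trans rfl)

lemma act_one (P : Bimod A₀ B₀) (p : P.X) :
    P.actRight (p ⊗ₜ (MonObj.one (X := B₀.X)) (1 : K)) = p := by
  have h := ConcreteCategory.congr_hom P.actRight_one (p ⊗ₜ (1 : K))
  have h2 : (MonoidalCategory.rightUnitor P.X).hom (p ⊗ₜ (1 : K)) = p := by
    simpa using ModuleCat.MonoidalCategory.rightUnitor_hom_apply (M := P.X) p (1 : K)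
  exact h.trans h2

end ElementAPI


/-! ### Generator morphisms and a joint-epi principle -/

section Generators
open MonoidalCategory

variable {K : Type u} [CommRing K] {a' a₂ y : Alg K}

/-- Constructor for morphisms of bimodules over the base algebra. -/
def baseHom {P Q : base K ⟶ y} (f : P.X ⟶ Q.X)
    (hr : P.actRight ≫ f = (f ▷ y.val.X) ≫ Q.actRight) : P ⟶ Q where
  hom := f
  left_act_hom := by
    rw [base_actLeft P, base_actLeft Q]
    exact triv_nat f
  right_act_hom := hr

@[simp] lemma baseHom_hom {P Q : base K ⟶ y} (f : P.X ⟶ Q.X)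
    (hr : P.actRight ≫ f = (f ▷ y.val.X) ≫ Q.actRight) :
    (baseHom f hr).hom = f := rfl

/-- The right `A'`-linear map `A' ⟶ X` sending `1` to `x`. -/
def elemHom (X : base K ⟶ a') (x : X.X) : (resBase a' a').obj (𝟙 a') ⟶ X :=
  baseHom
    (ModuleCat.ofHom ((X : Bimod (base K).val a'.val).actRight.hom ∘ₗ
      (TensorProduct.mk K (X : Bimod (base K).val a'.val).X a'.val.X x)) :
        ((resBase a' a').obj (𝟙 a')).X ⟶ X.X)
    (by
      apply ModuleCat.hom_ext
      apply TensorProduct.ext'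
      intro u v
      exact ConcreteCategory.congr_hom (X : Bimod (base K).val a'.val).right_assoc (x ⊗ₜ[K] (u ⊗ₜ[K] v)))

lemma elemHom_apply (X : base K ⟶ a') (x : X.X) (u : a'.val.X) :
    (elemHom X x).hom u = (X : Bimod (base K).val a'.val).actRight (x ⊗ₜ u) := rfl

lemma elemHom_one (X : base K ⟶ a') (x : X.X) :
    (elemHom X x).hom ((MonObj.one (X := a'.val.X)) (1 : K)) = x :=
  act_one (X : Bimod (base K).val a'.val) x

/-- The family of maps `f ▷ N` for `f : A' ⟶ X` is jointly epimorphic. -/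
lemma jointEpi {X : base K ⟶ a'} {N : a' ⟶ y} {W : ModuleCat.{u} K}
    {g₁ g₂ : tX (X : Bimod (base K).val a'.val) (N : Bimod a'.val y.val) ⟶ W}
    (h : ∀ x : X.X,
      (Bimod.whiskerRight (elemHom X x) (N : Bimod a'.val y.val)).hom ≫ g₁ =
      (Bimod.whiskerRight (elemHom X x) (N : Bimod a'.val y.val)).hom ≫ g₂) :
    g₁ = g₂ := by
  apply tensor_ext
  intro p q
  have key : tπ (X : Bimod (base K).val a'.val) (N : Bimod a'.val y.val) (p ⊗ₜ q) =
      (Bimod.whiskerRight (elemHom X p) (N : Bimod a'.val y.val)).hom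
        (tπ _ _ ((MonObj.one (X := a'.val.X)) (1 : K) ⊗ₜ q)) := by
    erw [wR_apply, elemHom_one]
  rw [key]
  exact (ConcreteCategory.congr_hom (h p) (tπ _ _ ((MonObj.one (X := a'.val.X)) (1 : K) ⊗ₜ q)))

end Generators


/-! ### Transparency of `resBase` for tensor constructions -/

section Bridges
open MonoidalCategory

variable {K : Type u} [CommRing K] {a' a₂ y : Alg K}

lemma wR_res_hom {P Q : a' ⟶ a₂} (f : P ⟶ Q) (N : a₂ ⟶ y) :
    (Bimod.whiskerRight ((resBase a' a₂).map f) (N : Bimod a₂.val y.val)).hom =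
    (Bimod.whiskerRight (f : P ⟶ Q) (N : Bimod a₂.val y.val)).hom := rfl

lemma wL_res_hom (P : a' ⟶ a₂) {N₁ N₂ : a₂ ⟶ y} (f : N₁ ⟶ N₂) :
    (Bimod.whiskerLeft ((resBase a' a₂).obj P : Bimod (base K).val a₂.val)
      (f : N₁ ⟶ N₂)).hom =
    (Bimod.whiskerLeft (P : Bimod a'.val a₂.val) (f : N₁ ⟶ N₂)).hom := rfl

lemma assocInv_res_hom (P : a' ⟶ a₂) (Q : a₂ ⟶ a₂) (L : a₂ ⟶ y) :
    Bimod.AssociatorBimod.inv ((resBase a' a₂).obj P : Bimod (base K).val a₂.val)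
      (Q : Bimod a₂.val a₂.val) (L : Bimod a₂.val y.val) =
    Bimod.AssociatorBimod.inv (P : Bimod a'.val a₂.val) Q L := rfl

lemma assocHom_res_hom (P : a' ⟶ a₂) (Q : a₂ ⟶ a₂) (L : a₂ ⟶ y) :
    Bimod.AssociatorBimod.hom ((resBase a' a₂).obj P : Bimod (base K).val a₂.val)
      (Q : Bimod a₂.val a₂.val) (L : Bimod a₂.val y.val) =
    Bimod.AssociatorBimod.hom (P : Bimod a'.val a₂.val) Q L := rfl

lemma lub_hom {A₀ B₀ : Mon (ModuleCat.{u} K)} (P : Bimod A₀ B₀) :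
    (Bimod.leftUnitorBimod P).hom.hom = Bimod.LeftUnitorBimod.hom P := rfl

lemma lu_res_apply (P : a' ⟶ y) (u : a'.val.X) (p : (P : Bimod a'.val y.val).X) :
    Bimod.LeftUnitorBimod.hom (P : Bimod a'.val y.val)
      (tπ ((resBase a' a').obj (𝟙 a') : Bimod (base K).val a'.val)
        (P : Bimod a'.val y.val) (u ⊗ₜ p)) =
      (P : Bimod a'.val y.val).actLeft (u ⊗ₜ p) :=
  lu_apply (P : Bimod a'.val y.val) u p

end Bridges


/-! ### Comodule-level auxiliary morphisms -/

section ComodAux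

variable {K : Type u} [CommRing K] {a a' y b₁ : Alg K} {C : Coring a} {C' : Coring a'}
  {E : Coring b₁}

/-- The left coaction of a bicomodule, as a morphism of right comodules. -/
def lcoactHom (M : Bicomodule C' C) : M.toRight ⟶ lextendObj C'.X M.toRight where
  f := M.lcoact
  colinear := by
    dsimp only [lextendObj, Bicomodule.toRight]
    rw [← Category.assoc, ← M.compat]
    simp

/-- Reassociation `X ⊗ (Y ⊗ N) ⟶ (X ⊗ Y) ⊗ N` as a morphism of right comodules. -/
def assocComod {t s' a₁ : Alg K} (X : t ⟶ s') (Y : s' ⟶ a₁) (N : RightComodule a₁ E) :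
    lextendObj X (lextendObj Y N) ⟶ lextendObj (X ≫ Y) N where
  f := (α_ X Y N.M).inv
  colinear := by
    dsimp only [lextendObj]
    calc (X ◁ (Y ◁ N.coact ≫ (α_ Y N.M E.X).inv)) ≫
          ((α_ X (Y ≫ N.M) E.X).inv ≫ (α_ X Y N.M).inv ▷ E.X)
        = X ◁ (Y ◁ N.coact) ≫ (α_ X Y (N.M ≫ E.X)).inv ≫ (α_ (X ≫ Y) N.M E.X).inv := by
          rw [Bicategory.whiskerLeft_comp, Category.assoc]
          congr 1
          bicategory_coherence
      _ = ((α_ X Y N.M).inv ≫ (X ≫ Y) ◁ N.coact) ≫ (α_ (X ≫ Y) N.M E.X).inv := by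
          rw [← Category.assoc]
          congr 1
          exact associator_inv_naturality_right X Y N.coact
      _ = (α_ X Y N.M).inv ≫ ((X ≫ Y) ◁ N.coact ≫ (α_ (X ≫ Y) N.M E.X).inv) := by
          simp only [Category.assoc]

/-- The comultiplication-like morphism `ψ` induced by a left coaction, at the level of
comodules over the base ring. -/
def psiA (N : RightComodule a' E) (ℓN : N ⟶ lextendObj C'.X N) :
    lextendObj C'.X N ⟶ lextendObj (C'.X ≫ C'.X) N :=
  lextendMap C'.X ℓN ≫ assocComod C'.X C'.X N

/-- `ψ`, base-level version. -/
def psiBase (N : RightComodule a' E) (ℓN : N ⟶ lextendObj C'.X N) :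
    lextendObj ((resBase a' a').obj C'.X) N ⟶
      lextendObj ((resBase a' a').obj (C'.X ≫ C'.X)) N where
  f := baseHom ((psiA N ℓN).f.hom) ((psiA N ℓN).f.right_act_hom)
  colinear := by
    apply Bimod.hom_ext
    have h := congrArg Bimod.Hom.hom (psiA N ℓN).colinear
    exact h

lemma psiBase_hom (N : RightComodule a' E) (ℓN : N ⟶ lextendObj C'.X N) :
    (psiBase N ℓN).f.hom =
      (Bimod.whiskerLeft (C'.X : Bimod a'.val a'.val) ℓN.f).hom ≫
        Bimod.AssociatorBimod.inv (C'.X : Bimod a'.val a'.val)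
          (C'.X : Bimod a'.val a'.val) (N.M : Bimod a'.val b₁.val) := rfl

end ComodAux


/-! ### The insertion morphisms and the key elementwise identity -/

section StarLemma
open MonoidalCategory

variable {K : Type u} [CommRing K] {a' y : Alg K} {C' : Coring a'}

/-- The map `C' ⟶ C' ⊗ C'`, `c ↦ x ⊗ c`. -/
def insHom (x : (C'.X : Bimod a'.val a'.val).X) :
    (resBase a' a').obj C'.X ⟶ (resBase a' a').obj (C'.X ≫ C'.X) :=
  baseHom
    (ModuleCat.ofHom ((tπ (C'.X : Bimod a'.val a'.val) (C'.X : Bimod a'.val a'.val)).hom ∘ₗ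
      TensorProduct.mk K _ _ x) :
        ((resBase a' a').obj C'.X).X ⟶ ((resBase a' a').obj (C'.X ≫ C'.X)).X)
    (by
      apply ModuleCat.hom_ext
      apply TensorProduct.ext'
      intro c u
      exact (tactRight_apply (C'.X : Bimod a'.val a'.val) (C'.X : Bimod a'.val a'.val)
        u x c).symm)

lemma insHom_apply (x : (C'.X : Bimod a'.val a'.val).X) (c : (C'.X : Bimod a'.val a'.val).X) :
    (insHom x).hom c = tπ (C'.X : Bimod a'.val a'.val) (C'.X : Bimod a'.val a'.val) (x ⊗ₜ c) :=
  rfl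

/-- The key elementwise identity: composing `ψ` with a generator morphism. -/
lemma star_eq (N : a' ⟶ y) (ℓN : N ⟶ C'.X ≫ N) (x : (C'.X : Bimod a'.val a'.val).X) :
    (Bimod.whiskerRight (elemHom ((resBase a' a').obj C'.X) x)
        (N : Bimod a'.val y.val)).hom ≫
      ((Bimod.whiskerLeft (C'.X : Bimod a'.val a'.val) ℓN).hom ≫
        Bimod.AssociatorBimod.inv (C'.X : Bimod a'.val a'.val)
          (C'.X : Bimod a'.val a'.val) (N : Bimod a'.val y.val)) =
    Bimod.LeftUnitorBimod.hom (N : Bimod a'.val y.val) ≫ ℓN.hom ≫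
      (Bimod.whiskerRight (insHom x) (N : Bimod a'.val y.val)).hom := by
  apply tensor_ext
  intro u n
  have inner : ∀ z : tX (C'.X : Bimod a'.val a'.val) (N : Bimod a'.val y.val),
      Bimod.AssociatorBimod.inv (C'.X : Bimod a'.val a'.val)
          (C'.X : Bimod a'.val a'.val) (N : Bimod a'.val y.val)
        (tπ (C'.X : Bimod a'.val a'.val)
          ((C'.X : Bimod a'.val a'.val).tensorBimod (N : Bimod a'.val y.val))
          ((C'.X : Bimod a'.val a'.val).actRight (x ⊗ₜ u) ⊗ₜ z)) =
      (Bimod.whiskerRight (insHom x) (N : Bimod a'.val y.val)).hom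
        (Bimod.TensorBimod.actLeft (C'.X : Bimod a'.val a'.val)
          (N : Bimod a'.val y.val) (u ⊗ₜ z)) := by
    intro z
    induction z using tX_induction with
    | zero => erw [TensorProduct.tmul_zero, map_zero, map_zero, TensorProduct.tmul_zero, map_zero, map_zero]; rfl
    | add z₁ z₂ h₁ h₂ => erw [TensorProduct.tmul_add, map_add, map_add, h₁, h₂, TensorProduct.tmul_add, map_add, map_add]; rfl
    | gen c m =>
        have hw : (Bimod.whiskerRight (insHom x) (N : Bimod a'.val y.val)).hom
            (tπ (C'.X : Bimod a'.val a'.val) (N : Bimod a'.val y.val)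
              ((C'.X : Bimod a'.val a'.val).actLeft (u ⊗ₜ c) ⊗ₜ m)) =
            tπ ((C'.X : Bimod a'.val a'.val).tensorBimod (C'.X : Bimod a'.val a'.val))
              (N : Bimod a'.val y.val)
              (tπ (C'.X : Bimod a'.val a'.val) (C'.X : Bimod a'.val a'.val)
                (x ⊗ₜ (C'.X : Bimod a'.val a'.val).actLeft (u ⊗ₜ c)) ⊗ₜ m) :=
          wR_apply (insHom x) _ _ _
        erw [assocInv_apply, tactLeft_apply, hw]
        exact congrArg (fun w => tπ ((C'.X : Bimod a'.val a'.val).tensorBimod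
          (C'.X : Bimod a'.val a'.val)) (N : Bimod a'.val y.val) (w ⊗ₜ m)) (tmid x u c)
  have s1 : (Bimod.whiskerRight (elemHom ((resBase a' a').obj C'.X) x)
      (N : Bimod a'.val y.val)).hom
        (tπ ((resBase a' a').obj (𝟙 a') : Bimod (base K).val a'.val)
          (N : Bimod a'.val y.val) (u ⊗ₜ n)) =
      tπ (C'.X : Bimod a'.val a'.val) (N : Bimod a'.val y.val)
        ((C'.X : Bimod a'.val a'.val).actRight (x ⊗ₜ u) ⊗ₜ n) := wR_apply _ _ _ _
  have s2 := wL_apply (C'.X : Bimod a'.val a'.val) ℓN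
    ((C'.X : Bimod a'.val a'.val).actRight (x ⊗ₜ u)) n
  have s4 := lu_res_apply N u n
  have s5 : ℓN.hom ((N : Bimod a'.val y.val).actLeft (u ⊗ₜ n)) =
      Bimod.TensorBimod.actLeft (C'.X : Bimod a'.val a'.val) (N : Bimod a'.val y.val)
        (u ⊗ₜ ℓN.hom n) := ConcreteCategory.congr_hom ℓN.left_act_hom (u ⊗ₜ n)
  show Bimod.AssociatorBimod.inv (C'.X : Bimod a'.val a'.val)
      (C'.X : Bimod a'.val a'.val) (N : Bimod a'.val y.val)
      ((Bimod.whiskerLeft (C'.X : Bimod a'.val a'.val) ℓN).hom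
        ((Bimod.whiskerRight (elemHom ((resBase a' a').obj C'.X) x)
          (N : Bimod a'.val y.val)).hom
          (tπ ((resBase a' a').obj (𝟙 a') : Bimod (base K).val a'.val)
            (N : Bimod a'.val y.val) (u ⊗ₜ n)))) =
    (Bimod.whiskerRight (insHom x) (N : Bimod a'.val y.val)).hom
      (ℓN.hom (Bimod.LeftUnitorBimod.hom (N : Bimod a'.val y.val)
        (tπ ((resBase a' a').obj (𝟙 a') : Bimod (base K).val a'.val)
          (N : Bimod a'.val y.val) (u ⊗ₜ n))))
  rw [s1, s2, s4, s5]
  exact inner (ℓN.hom n)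

end StarLemma


section Determination

variable {K : Type u} [CommRing K] {a a' b : Alg K} {C : Coring a} {D : Coring b}

/-- `Υ` is determined on generator morphisms by naturality and normalisation. -/
lemma upsilon_det (F : Comod C ⥤ Comod D) (M₀ : RightComodule a' C)
    (d : HomNatData F M₀) {X : base K ⟶ a'} (f : (resBase a' a').obj (𝟙 a') ⟶ X) :
    haveI := d.cM_iso
    (lextendF (base K) d.FM).map f ≫ d.Υ.app X =
      d.cFM ≫ eqToHom d.hres ≫ F.map (CategoryTheory.inv d.cM) ≫
        F.map ((lextendF (base K) M₀).map f) := by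
  have h := d.Υ.naturality f
  rw [h, d.norm]
  simp only [Functor.comp_map]
  erw [Category.assoc, Category.assoc]

end Determination


/-- The underlying module map of an isomorphism of comodules is an isomorphism. -/
lemma comod_isIso_hom {K : Type u} [CommRing K] {b₁ : Alg K} {D : Coring b₁}
    {P Q : Comod D} (g : P ⟶ Q) [IsIso g] : IsIso (g.f.hom) := by
  refine ⟨⟨(CategoryTheory.inv g).f.hom, ?_, ?_⟩⟩
  · have h2 := congrArg (fun (k : P ⟶ P) => ComodHom.f k) (IsIso.hom_inv_id g)
    have h3 := congrArg Bimod.Hom.hom h2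
    simpa only [comod_comp_f, bimod_comp_hom, comod_id_f, bimod_id_hom] using h3
  · have h2 := congrArg (fun (k : Q ⟶ Q) => ComodHom.f k) (IsIso.inv_hom_id g)
    have h3 := congrArg Bimod.Hom.hom h2
    simpa only [comod_comp_f, bimod_comp_hom, comod_id_f, bimod_id_hom] using h3

/-- Let `M` be a `(C',C)`-bicomodule and
`F : Comod-C ⥤ Comod-D` a coproduct-preserving `K`-linear functor which is
`M`-compatible, i.e. `Υ_{C',M}` and `Υ_{C' ⊗_{A'} C',M}` are isomorphisms.
Then the unique `A'`-linear map `λ_{F(M)} : F(M) ⟶ C' ⊗_{A'} F(M)` with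
`Υ_{C',M} ∘ λ_{F(M)} = F(λ_M)` is a left `C'`-comodule structure making
`F(M)` a `(C',D)`-bicomodule.  Moreover for any natural transformation
`η : F₁ ⟶ F₂` of `M`-compatible such functors, `η_M` is a morphism of
`(C',D)`-bicomodules. -/
theorem statement9 {K : Type u} [CommRing K] {a a' b : Alg K}
    {C : Coring a} {C' : Coring a'} {D : Coring b}
    (M : Bicomodule C' C) (F : Comod C ⥤ Comod D)
    (hlin : KLinearFunctor F) (hco : PreservesCoproducts F)
    (d : HomNatData F M.toRight)
    (hcompat₁ : IsIso (d.Υ.app ((resBase a' a').obj C'.X)))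
    (hcompat₂ : IsIso (d.Υ.app ((resBase a' a').obj (C'.X ≫ C'.X))))
    (lamC : (resComod a' C).obj M.toRight ⟶
      lextendObj ((resBase a' a').obj C'.X) M.toRight)
    (hlamC : lamC.f.hom = M.lcoact.hom)
    (lamF : (resComod a' D).obj d.FM ⟶ lextendObj ((resBase a' a').obj C'.X) d.FM)
    (hlamF : lamF ≫ d.Υ.app ((resBase a' a').obj C'.X) = eqToHom d.hres ≫ F.map lamC)
    (ℓ : d.FM.M ⟶ C'.X ≫ d.FM.M) (hℓ : ℓ.hom = lamF.f.hom) :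
    (ℓ ≫ C'.comul ▷ d.FM.M ≫ (α_ C'.X C'.X d.FM.M).hom = ℓ ≫ C'.X ◁ ℓ) ∧
    (ℓ ≫ C'.counit ▷ d.FM.M ≫ (λ_ d.FM.M).hom = 𝟙 d.FM.M) ∧
    (d.FM.coact ≫ ℓ ▷ D.X ≫ (α_ C'.X d.FM.M D.X).hom = ℓ ≫ C'.X ◁ d.FM.coact) ∧
    (∀ (F₂ : Comod C ⥤ Comod D), KLinearFunctor F₂ → PreservesCoproducts F₂ →
      ∀ (d₂ : HomNatData F₂ M.toRight), IsIso (d₂.Υ.app ((resBase a' a').obj C'.X)) →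
      IsIso (d₂.Υ.app ((resBase a' a').obj (C'.X ≫ C'.X))) →
      ∀ (lamC₂ : (resComod a' C).obj M.toRight ⟶
          lextendObj ((resBase a' a').obj C'.X) M.toRight),
        lamC₂.f.hom = M.lcoact.hom →
      ∀ (lamF₂ : (resComod a' D).obj d₂.FM ⟶
          lextendObj ((resBase a' a').obj C'.X) d₂.FM),
        lamF₂ ≫ d₂.Υ.app ((resBase a' a').obj C'.X) = eqToHom d₂.hres ≫ F₂.map lamC₂ →
      ∀ (ℓ₂ : d₂.FM.M ⟶ C'.X ≫ d₂.FM.M), ℓ₂.hom = lamF₂.f.hom →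
      ∀ (η : F ⟶ F₂) (η' : d.FM ⟶ d₂.FM),
        (resComod a' D).map η' =
          eqToHom d.hres ≫ η.app ((resComod a' C).obj M.toRight) ≫ eqToHom d₂.hres.symm →
        ℓ ≫ C'.X ◁ η'.f = η'.f ≫ ℓ₂) := by
  haveI := d.cM_iso
  haveI := d.cFM_iso
  haveI := hcompat₁
  haveI := hcompat₂
  refine ⟨?_, ?_, ?_, ?_⟩
  · -- coassociativity
    have Mside : ∀ x : (C'.X : Bimod a'.val a'.val).X,
        d.cM ≫ lamC ≫ (lextendF (base K) M.toRight).map (insHom x) =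
        (lextendF (base K) M.toRight).map (elemHom ((resBase a' a').obj C'.X) x) ≫
          psiBase M.toRight (lcoactHom M) := by
      intro x
      apply comodHom_ext'
      apply Bimod.hom_ext
      show d.cM.f.hom ≫ lamC.f.hom ≫
          (Bimod.whiskerRight (insHom x) (M.M : Bimod a'.val a.val)).hom =
        (Bimod.whiskerRight (elemHom ((resBase a' a').obj C'.X) x)
            (M.M : Bimod a'.val a.val)).hom ≫
          ((Bimod.whiskerLeft (C'.X : Bimod a'.val a'.val) M.lcoact).hom ≫
            Bimod.AssociatorBimod.inv (C'.X : Bimod a'.val a'.val)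
              (C'.X : Bimod a'.val a'.val) (M.M : Bimod a'.val a.val))
      rw [d.hcM, hlamC]
      exact (star_eq M.M M.lcoact x).symm
    have MsideC : ∀ x : (C'.X : Bimod a'.val a'.val).X,
        lamC ≫ (lextendF (base K) M.toRight).map (insHom x) =
        CategoryTheory.inv d.cM ≫
          (lextendF (base K) M.toRight).map (elemHom ((resBase a' a').obj C'.X) x) ≫
          psiBase M.toRight (lcoactHom M) := by
      intro x
      rw [← Mside x]
      simp only [IsIso.inv_hom_id_assoc]
    have key : ((Bimod.whiskerLeft (C'.X : Bimod a'.val a'.val) ℓ).hom ≫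
          Bimod.AssociatorBimod.inv (C'.X : Bimod a'.val a'.val)
            (C'.X : Bimod a'.val a'.val) (d.FM.M : Bimod a'.val b.val)) ≫
          (d.Υ.app ((resBase a' a').obj (C'.X ≫ C'.X))).f.hom =
        (d.Υ.app ((resBase a' a').obj C'.X)).f.hom ≫
          (F.map (psiBase M.toRight (lcoactHom M))).f.hom := by
      apply jointEpi (X := (resBase a' a').obj C'.X) (N := d.FM.M)
      intro x
      have stF := star_eq d.FM.M ℓ x
      have ch1 : (lextendF (base K) d.FM).map (insHom x) ≫
          d.Υ.app ((resBase a' a').obj (C'.X ≫ C'.X)) =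
          d.Υ.app ((resBase a' a').obj C'.X) ≫
            F.map ((lextendF (base K) M.toRight).map (insHom x)) := by
        have hn := d.Υ.naturality (insHom x)
        simpa only [Functor.comp_map] using hn
      have ch2 := upsilon_det F M.toRight d (elemHom ((resBase a' a').obj C'.X) x)
      have chainEq : d.cFM ≫ lamF ≫ (lextendF (base K) d.FM).map (insHom x) ≫
          d.Υ.app ((resBase a' a').obj (C'.X ≫ C'.X)) =
          (lextendF (base K) d.FM).map (elemHom ((resBase a' a').obj C'.X) x) ≫
            d.Υ.app ((resBase a' a').obj C'.X) ≫
              F.map (psiBase M.toRight (lcoactHom M)) := by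
        rw [ch1]
        slice_lhs 2 3 => rw [hlamF]
        slice_rhs 1 2 => rw [ch2]
        simp only [Category.assoc, ← Functor.map_comp]
        rw [MsideC x]
      have e := congrArg (fun (g : (lextendObj ((resBase a' a').obj (𝟙 a')) d.FM) ⟶ _) =>
        g.f.hom) chainEq
      simp only [comod_comp_f, bimod_comp_hom] at e
      rw [d.hcFM] at e
      show (Bimod.whiskerRight (elemHom ((resBase a' a').obj C'.X) x)
          (d.FM.M : Bimod a'.val b.val)).hom ≫
          (((Bimod.whiskerLeft (C'.X : Bimod a'.val a'.val) ℓ).hom ≫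
            Bimod.AssociatorBimod.inv (C'.X : Bimod a'.val a'.val)
              (C'.X : Bimod a'.val a'.val) (d.FM.M : Bimod a'.val b.val)) ≫
            (d.Υ.app ((resBase a' a').obj (C'.X ≫ C'.X))).f.hom) =
        (Bimod.whiskerRight (elemHom ((resBase a' a').obj C'.X) x)
          (d.FM.M : Bimod a'.val b.val)).hom ≫
          ((d.Υ.app ((resBase a' a').obj C'.X)).f.hom ≫
            (F.map (psiBase M.toRight (lcoactHom M))).f.hom)
      erw [← Category.assoc, stF, hℓ]
      simp only [Category.assoc]
      exact e
    have MEq : lamC ≫ psiBase M.toRight (lcoactHom M) =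
        lamC ≫ (lextendF (base K) M.toRight).map ((resBase a' a').map C'.comul) := by
      apply comodHom_ext'
      apply Bimod.hom_ext
      have la := congrArg Bimod.Hom.hom M.lcoassoc
      simp only [bimod_comp_hom] at la
      have la2 := congrArg (fun g => g ≫ Bimod.AssociatorBimod.inv
        (C'.X : Bimod a'.val a'.val) (C'.X : Bimod a'.val a'.val)
        (M.M : Bimod a'.val a.val)) la
      simp only [Category.assoc] at la2
      show lamC.f.hom ≫
          ((Bimod.whiskerLeft (C'.X : Bimod a'.val a'.val) M.lcoact).hom ≫
            Bimod.AssociatorBimod.inv (C'.X : Bimod a'.val a'.val)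
              (C'.X : Bimod a'.val a'.val) (M.M : Bimod a'.val a.val)) =
        lamC.f.hom ≫
          (Bimod.whiskerRight ((resBase a' a').map C'.comul) (M.M : Bimod a'.val a.val)).hom
      rw [hlamC]
      refine Eq.trans ?_ (Eq.trans la2.symm ?_)
      · rfl
      · show M.lcoact.hom ≫ (Bimod.whiskerRight C'.comul (M.M : Bimod a'.val a.val)).hom ≫
            (Bimod.AssociatorBimod.hom (C'.X : Bimod a'.val a'.val)
              (C'.X : Bimod a'.val a'.val) (M.M : Bimod a'.val a.val) ≫
              Bimod.AssociatorBimod.inv (C'.X : Bimod a'.val a'.val)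
                (C'.X : Bimod a'.val a'.val) (M.M : Bimod a'.val a.val)) =
          M.lcoact.hom ≫
            (Bimod.whiskerRight C'.comul (M.M : Bimod a'.val a.val)).hom
        rw [Bimod.AssociatorBimod.hom_inv_id]
        exact congrArg (fun g => M.lcoact.hom ≫ g)
          (Category.comp_id (Bimod.whiskerRight C'.comul (M.M : Bimod a'.val a.val)).hom)
    have Tiso : IsIso ((d.Υ.app ((resBase a' a').obj (C'.X ≫ C'.X))).f.hom) :=
      comod_isIso_hom _
    have cc1 : lamF ≫ d.Υ.app ((resBase a' a').obj C'.X) ≫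
        F.map (psiBase M.toRight (lcoactHom M)) =
        eqToHom d.hres ≫ F.map (lamC ≫ psiBase M.toRight (lcoactHom M)) := by
      rw [← Category.assoc, hlamF, Category.assoc, ← F.map_comp]
    have cc2 : lamF ≫ (lextendF (base K) d.FM).map ((resBase a' a').map C'.comul) ≫
        d.Υ.app ((resBase a' a').obj (C'.X ≫ C'.X)) =
        eqToHom d.hres ≫ F.map (lamC ≫
          (lextendF (base K) M.toRight).map ((resBase a' a').map C'.comul)) := by
      have hn := d.Υ.naturality ((resBase a' a').map C'.comul)
      rw [← Category.assoc, Category.assoc lamF, hn, ← Category.assoc, hlamF]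
      simp only [Functor.comp_map, Category.assoc, F.map_comp]
    have big : lamF ≫ d.Υ.app ((resBase a' a').obj C'.X) ≫
        F.map (psiBase M.toRight (lcoactHom M)) =
        lamF ≫ (lextendF (base K) d.FM).map ((resBase a' a').map C'.comul) ≫
          d.Υ.app ((resBase a' a').obj (C'.X ≫ C'.X)) := by
      rw [cc1, cc2, MEq]
    have ebig := congrArg (fun (g : (resComod a' D).obj d.FM ⟶ _) => g.f.hom) big
    simp only [comod_comp_f, bimod_comp_hom] at ebig
    have E1 : ℓ.hom ≫ ((Bimod.whiskerLeft (C'.X : Bimod a'.val a'.val) ℓ).hom ≫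
          Bimod.AssociatorBimod.inv (C'.X : Bimod a'.val a'.val)
            (C'.X : Bimod a'.val a'.val) (d.FM.M : Bimod a'.val b.val)) =
        ℓ.hom ≫ (Bimod.whiskerRight ((resBase a' a').map C'.comul)
          (d.FM.M : Bimod a'.val b.val)).hom := by
      haveI := Tiso
      erw [← cancel_mono ((d.Υ.app ((resBase a' a').obj (C'.X ≫ C'.X))).f.hom)]
      erw [Category.assoc, key, hℓ]
      erw [Category.assoc]
      exact ebig
    apply Bimod.hom_ext
    show ℓ.hom ≫ (Bimod.whiskerRight ((resBase a' a').map C'.comul)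
        (d.FM.M : Bimod a'.val b.val)).hom ≫
        Bimod.AssociatorBimod.hom (C'.X : Bimod a'.val a'.val)
          (C'.X : Bimod a'.val a'.val) (d.FM.M : Bimod a'.val b.val) =
      ℓ.hom ≫ (Bimod.whiskerLeft (C'.X : Bimod a'.val a'.val) ℓ).hom
    have E2 := congrArg (fun g => g ≫ Bimod.AssociatorBimod.hom
      (C'.X : Bimod a'.val a'.val) (C'.X : Bimod a'.val a'.val)
      (d.FM.M : Bimod a'.val b.val)) E1
    simp only [Category.assoc] at E2
    rw [Bimod.AssociatorBimod.inv_hom_id] at E2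
    erw [← E2]
    exact congrArg (fun g => ℓ.hom ≫ g)
      (Category.comp_id (Bimod.whiskerLeft (C'.X : Bimod a'.val a'.val) ℓ).hom).symm
  · -- counit
    have hnat := d.Υ.naturality ((resBase a' a').map C'.counit)
    have main : lamF ≫ (lextendF (base K) d.FM).map ((resBase a' a').map C'.counit) ≫
        d.Υ.app ((resBase a' a').obj (𝟙 a')) =
        eqToHom d.hres ≫ F.map (lamC ≫
          (lextendF (base K) M.toRight).map ((resBase a' a').map C'.counit)) := by
      rw [← Category.assoc, Category.assoc lamF, hnat, ← Category.assoc, hlamF]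
      simp only [Functor.comp_map, Category.assoc, F.map_comp]
    have claimA : lamC ≫ (lextendF (base K) M.toRight).map ((resBase a' a').map C'.counit) ≫
        d.cM = 𝟙 _ := by
      apply comodHom_ext'
      apply Bimod.hom_ext
      have lc := congrArg Bimod.Hom.hom M.lcounit
      simp only [bimod_comp_hom, bimod_id_hom] at lc
      show lamC.f.hom ≫ (Bimod.whiskerRight ((resBase a' a').map C'.counit)
          (M.toRight.M : Bimod a'.val a.val)).hom ≫ d.cM.f.hom = 𝟙 _
      rw [hlamC, d.hcM]
      exact lc
    have invEq : lamC ≫ (lextendF (base K) M.toRight).map ((resBase a' a').map C'.counit) =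
        CategoryTheory.inv d.cM := by
      exact IsIso.eq_inv_of_inv_hom_id (by rw [Category.assoc]; exact claimA)
    have final : lamF ≫ (lextendF (base K) d.FM).map ((resBase a' a').map C'.counit) ≫
        d.cFM = 𝟙 _ := by
      rw [d.norm, invEq] at main
      rw [← cancel_mono (eqToHom d.hres ≫ F.map (CategoryTheory.inv d.cM))]
      simp only [Category.assoc, Category.id_comp]
      simpa only [Category.assoc] using main
    have e := congrArg (fun (g : (resComod a' D).obj d.FM ⟶ (resComod a' D).obj d.FM) =>
      g.f.hom) final
    simp only [comod_comp_f, bimod_comp_hom, comod_id_f, bimod_id_hom] at e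
    apply Bimod.hom_ext
    show ℓ.hom ≫ (Bimod.whiskerRight ((resBase a' a').map C'.counit)
        (d.FM.M : Bimod a'.val b.val)).hom ≫
        Bimod.LeftUnitorBimod.hom (d.FM.M : Bimod a'.val b.val) = 𝟙 _
    rw [hℓ]
    erw [bimod_comp_hom, d.hcFM] at e
    exact e
  · -- D-colinearity
    have ecol := congrArg Bimod.Hom.hom lamF.colinear
    simp only [bimod_comp_hom] at ecol
    have ecol' : d.FM.coact.hom ≫ (Bimod.whiskerRight lamF.f (D.X : Bimod b.val b.val)).hom =
        lamF.f.hom ≫ ((Bimod.whiskerLeft (C'.X : Bimod a'.val a'.val) d.FM.coact).hom ≫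
          Bimod.AssociatorBimod.inv (C'.X : Bimod a'.val a'.val)
            (d.FM.M : Bimod a'.val b.val) (D.X : Bimod b.val b.val)) := ecol
    have b1 : (Bimod.whiskerRight ℓ (D.X : Bimod b.val b.val)).hom =
        (Bimod.whiskerRight lamF.f (D.X : Bimod b.val b.val)).hom := by
      apply tensor_ext
      intro p q
      have h1 := wR_apply ℓ (D.X : Bimod b.val b.val) p q
      have h2 : (Bimod.whiskerRight lamF.f (D.X : Bimod b.val b.val)).hom
          (tπ (d.FM.M : Bimod a'.val b.val) (D.X : Bimod b.val b.val) (p ⊗ₜ q)) =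
          tπ ((C'.X ≫ d.FM.M : a' ⟶ b) : Bimod a'.val b.val) (D.X : Bimod b.val b.val)
            (lamF.f.hom p ⊗ₜ q) := wR_apply lamF.f _ p q
      rw [hℓ] at h1
      exact h1.trans h2.symm
    apply Bimod.hom_ext
    show d.FM.coact.hom ≫ (Bimod.whiskerRight ℓ (D.X : Bimod b.val b.val)).hom ≫
        Bimod.AssociatorBimod.hom (C'.X : Bimod a'.val a'.val)
          (d.FM.M : Bimod a'.val b.val) (D.X : Bimod b.val b.val) =
      ℓ.hom ≫ (Bimod.whiskerLeft (C'.X : Bimod a'.val a'.val) d.FM.coact).hom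
    erw [b1, hℓ, ← Category.assoc, ecol']
    erw [Category.assoc, Category.assoc]
    rw [Bimod.AssociatorBimod.inv_hom_id]
    exact congrArg (fun g => lamF.f.hom ≫ g)
      (Category.comp_id (Bimod.whiskerLeft (C'.X : Bimod a'.val a'.val) d.FM.coact).hom)
  · -- naturality
    intro F₂ hlin₂ hco₂ d₂ hc₁ hc₂ lamC₂ hlamC₂ lamF₂ hlamF₂ ℓ₂ hℓ₂ η η' hη'
    haveI := d₂.cM_iso
    haveI := d₂.cFM_iso
    haveI := hc₁
    have cMeq : d₂.cM = d.cM := by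
      apply comodHom_ext'
      apply Bimod.hom_ext
      rw [d₂.hcM, d.hcM]
    have lamCeq : lamC₂ = lamC := by
      apply comodHom_ext'
      apply Bimod.hom_ext
      rw [hlamC₂, hlamC]
    have exch : ∀ x : (C'.X : Bimod a'.val a'.val).X,
        (lextendF (base K) d.FM).map (elemHom ((resBase a' a').obj C'.X) x) ≫
          lextendMap ((resBase a' a').obj C'.X) η' =
        lextendMap ((resBase a' a').obj (𝟙 a')) η' ≫
          (lextendF (base K) d₂.FM).map (elemHom ((resBase a' a').obj C'.X) x) := by
      intro x
      apply comodHom_ext'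
      exact (Bicategory.whisker_exchange (elemHom ((resBase a' a').obj C'.X) x) η'.f).symm
    have lext_cFM : lextendMap ((resBase a' a').obj (𝟙 a')) η' ≫ d₂.cFM =
        d.cFM ≫ (resComod a' D).map η' := by
      apply comodHom_ext'
      apply Bimod.hom_ext
      show (Bimod.whiskerLeft ((resBase a' a').obj (𝟙 a') : Bimod (base K).val a'.val)
          η'.f).hom ≫ d₂.cFM.f.hom = d.cFM.f.hom ≫ η'.f.hom
      rw [d.hcFM, d₂.hcFM]
      apply tensor_ext
      intro u n
      have h1 := wL_apply ((resBase a' a').obj (𝟙 a') : Bimod (base K).val a'.val) η'.f u n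
      have h2 := lu_res_apply d₂.FM.M u (η'.f.hom n)
      have h3 := lu_res_apply d.FM.M u n
      have h4 : η'.f.hom ((d.FM.M : Bimod a'.val b.val).actLeft (u ⊗ₜ n)) =
          (d₂.FM.M : Bimod a'.val b.val).actLeft (u ⊗ₜ η'.f.hom n) :=
        ConcreteCategory.congr_hom η'.f.left_act_hom (u ⊗ₜ n)
      show Bimod.LeftUnitorBimod.hom (d₂.FM.M : Bimod a'.val b.val)
          ((Bimod.whiskerLeft ((resBase a' a').obj (𝟙 a') : Bimod (base K).val a'.val)
            η'.f).hom (tπ _ _ (u ⊗ₜ n))) =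
        η'.f.hom (Bimod.LeftUnitorBimod.hom (d.FM.M : Bimod a'.val b.val) (tπ _ _ (u ⊗ₜ n)))
      rw [h1]
      exact h2.trans (h4.symm.trans (congrArg η'.f.hom h3.symm))
    have compat : (d.Υ.app ((resBase a' a').obj C'.X)).f.hom ≫
        (η.app (lextendObj ((resBase a' a').obj C'.X) M.toRight)).f.hom =
        (lextendMap ((resBase a' a').obj C'.X) η').f.hom ≫
          (d₂.Υ.app ((resBase a' a').obj C'.X)).f.hom := by
      apply jointEpi (X := (resBase a' a').obj C'.X) (N := d.FM.M)
      intro x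
      have ch2 := upsilon_det F M.toRight d (elemHom ((resBase a' a').obj C'.X) x)
      have ch2' := upsilon_det F₂ M.toRight d₂ (elemHom ((resBase a' a').obj C'.X) x)
      have hnat : F.map (CategoryTheory.inv d.cM ≫
            (lextendF (base K) M.toRight).map (elemHom ((resBase a' a').obj C'.X) x)) ≫
          η.app (lextendObj ((resBase a' a').obj C'.X) M.toRight) =
          η.app ((resComod a' C).obj M.toRight) ≫
            F₂.map (CategoryTheory.inv d.cM ≫
              (lextendF (base K) M.toRight).map (elemHom ((resBase a' a').obj C'.X) x)) :=
        η.naturality _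
      have chainEq : (lextendF (base K) d.FM).map (elemHom ((resBase a' a').obj C'.X) x) ≫
          d.Υ.app ((resBase a' a').obj C'.X) ≫
            η.app (lextendObj ((resBase a' a').obj C'.X) M.toRight) =
          (lextendF (base K) d.FM).map (elemHom ((resBase a' a').obj C'.X) x) ≫
            lextendMap ((resBase a' a').obj C'.X) η' ≫
              d₂.Υ.app ((resBase a' a').obj C'.X) := by
        calc (lextendF (base K) d.FM).map (elemHom ((resBase a' a').obj C'.X) x) ≫
              d.Υ.app ((resBase a' a').obj C'.X) ≫
                η.app (lextendObj ((resBase a' a').obj C'.X) M.toRight)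
            = d.cFM ≫ eqToHom d.hres ≫
                F.map (CategoryTheory.inv d.cM ≫
                  (lextendF (base K) M.toRight).map (elemHom ((resBase a' a').obj C'.X) x)) ≫
                η.app (lextendObj ((resBase a' a').obj C'.X) M.toRight) := by
              rw [← Category.assoc, ch2]
              simp only [F.map_comp, Category.assoc]
          _ = d.cFM ≫ eqToHom d.hres ≫ η.app ((resComod a' C).obj M.toRight) ≫
                F₂.map (CategoryTheory.inv d.cM ≫
                  (lextendF (base K) M.toRight).map (elemHom ((resBase a' a').obj C'.X) x)) := by
              rw [hnat]
          _ = d.cFM ≫ (resComod a' D).map η' ≫ eqToHom d₂.hres ≫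
                F₂.map (CategoryTheory.inv d.cM ≫
                  (lextendF (base K) M.toRight).map (elemHom ((resBase a' a').obj C'.X) x)) := by
              rw [hη']
              simp only [Category.assoc, eqToHom_trans_assoc, eqToHom_refl, Category.id_comp]
          _ = lextendMap ((resBase a' a').obj (𝟙 a')) η' ≫ d₂.cFM ≫ eqToHom d₂.hres ≫
                F₂.map (CategoryTheory.inv d₂.cM ≫
                  (lextendF (base K) M.toRight).map (elemHom ((resBase a' a').obj C'.X) x)) := by
              simp only [cMeq]
              rw [← Category.assoc, ← lext_cFM]
              simp only [Category.assoc]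
          _ = lextendMap ((resBase a' a').obj (𝟙 a')) η' ≫
                (lextendF (base K) d₂.FM).map (elemHom ((resBase a' a').obj C'.X) x) ≫
                  d₂.Υ.app ((resBase a' a').obj C'.X) := by
              rw [ch2']
              simp only [F₂.map_comp, Category.assoc]
          _ = _ := by
              rw [← Category.assoc, ← exch x]
              simp only [Category.assoc]
      have e := congrArg (fun (g : (lextendF (base K) d.FM).obj
          ((resBase a' a').obj (𝟙 a')) ⟶ _) => g.f.hom) chainEq
      simp only [comod_comp_f, bimod_comp_hom] at e
      exact e
    have c1 : lamF ≫ d.Υ.app ((resBase a' a').obj C'.X) ≫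
        η.app (lextendObj ((resBase a' a').obj C'.X) M.toRight) =
        ((resComod a' D).map η') ≫ lamF₂ ≫ d₂.Υ.app ((resBase a' a').obj C'.X) := by
      rw [← Category.assoc, hlamF, Category.assoc, η.naturality lamC, hη', hlamF₂, lamCeq]
      simp only [Category.assoc, eqToHom_trans_assoc, eqToHom_refl, Category.id_comp]
    have e1 := congrArg (fun (g : (resComod a' D).obj d.FM ⟶ _) => g.f.hom) c1
    simp only [comod_comp_f, bimod_comp_hom] at e1
    have T2iso : IsIso ((d₂.Υ.app ((resBase a' a').obj C'.X)).f.hom) := comod_isIso_hom _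
    have fin2 : lamF.f.hom ≫ (lextendMap ((resBase a' a').obj C'.X) η').f.hom =
        η'.f.hom ≫ lamF₂.f.hom := by
      haveI := T2iso
      erw [← cancel_mono ((d₂.Υ.app ((resBase a' a').obj C'.X)).f.hom)]
      simp only [Category.assoc]
      rw [← compat]
      exact e1
    apply Bimod.hom_ext
    show ℓ.hom ≫ (Bimod.whiskerLeft (C'.X : Bimod a'.val a'.val) η'.f).hom =
      η'.f.hom ≫ ℓ₂.hom
    rw [hℓ, hℓ₂]
    exact fin2

end CoringSep
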